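/- arXiv:1712.03300 — 5 statements merged into one kernel-verified Lean document; each statement's English description precedes it below -/
import Mathlib

section
/- Assume K ⊆ L satisfy conditions (L0)–(L2). Let u be a sequence in K and let U be its colimit in L. Then U is K-generic if and only if u is a weak Fraïssé sequence in K. -/
open CategoryTheory CategoryTheory.Limits

universe v u

variable {L : Type u} [Category.{v} L]

/-- A subcategory of `L`. -/
structure Subcat (L : Type u) [Category.{v} L] where
  objs : Set L
  homs : ∀ a b : L, Set (a ⟶ b)
  src_mem : ∀ {a b : L} {f : a ⟶ b}, f ∈ homs a b → a ∈ objs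
  tgt_mem : ∀ {a b : L} {f : a ⟶ b}, f ∈ homs a b → b ∈ objs
  id_mem : ∀ a ∈ objs, 𝟙 a ∈ homs a a
  comp_mem : ∀ {a b c : L} {f : a ⟶ b} {g : b ⟶ c},
      f ∈ homs a b → g ∈ homs b c → f ≫ g ∈ homs a c

/-- A countable subcategory. -/
def Subcat.IsCountable (S : Subcat L) : Prop :=
  S.objs.Countable ∧ ∀ a b : L, (S.homs a b).Countable

/-- A sequence in the full subcategory `K` of `L`. -/
def SeqIn (K : Set L) (u : ℕ ⥤ L) : Prop := ∀ n : ℕ, u.obj n ∈ K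

/-- (L0): all `L`-arrows are monic. -/
def CondL0 (L : Type u) [Category.{v} L] : Prop := ∀ ⦃X Y : L⦄ (f : X ⟶ Y), Mono f

/-- (L1): every sequence in `K` has a colimit in `L`, and every `L`-object is the
colimit of a sequence in `K`. -/
def CondL1 (K : Set L) : Prop :=
  (∀ u : ℕ ⥤ L, SeqIn K u → ∃ c : Cocone u, Nonempty (IsColimit c)) ∧
  (∀ X : L, ∃ u : ℕ ⥤ L, SeqIn K u ∧ ∃ c : Cocone u, c.pt = X ∧ Nonempty (IsColimit c))

/-- (L2): every `K`-object is `ω`-small in `L` (for sequences in `K`). -/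
def CondL2 (K : Set L) : Prop :=
  ∀ a ∈ K, ∀ u : ℕ ⥤ L, SeqIn K u → ∀ c : Cocone u, IsColimit c →
    ∀ f : a ⟶ c.pt, ∃ (n : ℕ) (f' : a ⟶ u.obj n), f' ≫ c.ι.app n = f

/-- `U` is weakly `K`-injective. -/
def WeaklyInjective (K : Set L) (U : L) : Prop :=
  ∀ a ∈ K, ∀ e : a ⟶ U, ∃ b ∈ K, ∃ i : a ⟶ b,
    ∀ y ∈ K, ∀ f : b ⟶ y, ∃ g : y ⟶ U, i ≫ f ≫ g = e

/-- `U` is `K`-generic: every `K`-object admits an arrow into `U`, and `U` is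
weakly `K`-injective. -/
def IsGeneric (K : Set L) (U : L) : Prop :=
  (∀ x ∈ K, Nonempty (x ⟶ U)) ∧ WeaklyInjective K U

/-- A weak Fraïssé sequence in the full subcategory `K` of `L`: (G1) and (G2)
relative to `K`. -/
def IsWeakFraisseSeqIn (K : Set L) (u : ℕ ⥤ L) : Prop :=
  (∀ x ∈ K, ∃ n : ℕ, Nonempty (x ⟶ u.obj n)) ∧
  (∀ n : ℕ, ∃ (m : ℕ) (hnm : n ≤ m), ∀ y ∈ K, ∀ f : u.obj m ⟶ y,
    ∃ (k : ℕ) (hmk : m ≤ k) (g : y ⟶ u.obj k),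
      u.map (homOfLE hnm) ≫ f ≫ g = u.map (homOfLE (hnm.trans hmk)))

/-- The full subcategory `K` is directed. -/
def DirectedIn (K : Set L) : Prop :=
  ∀ x ∈ K, ∀ y ∈ K, ∃ z ∈ K, Nonempty (x ⟶ z) ∧ Nonempty (y ⟶ z)

/-- An arrow between `K`-objects that is amalgamable in the full subcategory `K`. -/
def AmalgamableIn (K : Set L) {z z' : L} (e : z ⟶ z') : Prop :=
  ∀ x ∈ K, ∀ y ∈ K, ∀ (f : z' ⟶ x) (g : z' ⟶ y),
    ∃ w ∈ K, ∃ (f' : x ⟶ w) (g' : y ⟶ w), e ≫ f ≫ f' = e ≫ g ≫ g'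

/-- The full subcategory `K` has the weak amalgamation property. -/
def HasWAPIn (K : Set L) : Prop :=
  ∀ z ∈ K, ∃ z' ∈ K, ∃ e : z ⟶ z', AmalgamableIn K e

/-- `S` is a weakly dominating subcategory of the full subcategory `K`. -/
def WeaklyDominatingIn (K : Set L) (S : Subcat L) : Prop :=
  S.objs ⊆ K ∧
  (∀ x ∈ K, ∃ y ∈ S.objs, Nonempty (x ⟶ y)) ∧
  (∀ y ∈ S.objs, ∃ (y' : L) (j : y ⟶ y'), j ∈ S.homs y y' ∧
    ∀ z ∈ K, ∀ f : y' ⟶ z, ∃ w ∈ K, ∃ g : z ⟶ w, j ≫ f ≫ g ∈ S.homs y w)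

/-- The full subcategory `K` is a weak Fraïssé category: directed, WAP, and weakly
dominated by a countable subcategory. -/
def IsWeakFraisseCatIn (K : Set L) : Prop :=
  DirectedIn K ∧ HasWAPIn K ∧
    ∃ S : Subcat L, S.IsCountable ∧ WeaklyDominatingIn K S


/-- Factorization through an arbitrarily late stage of the sequence. -/
lemma factor_ge {K : Set L} (h2 : CondL2 K) {a : L} (ha : a ∈ K)
    (u : ℕ ⥤ L) (hu : SeqIn K u) (c : Cocone u) (hc : IsColimit c)
    (f : a ⟶ c.pt) (m : ℕ) :
    ∃ (k : ℕ) (_ : m ≤ k) (f' : a ⟶ u.obj k), f' ≫ c.ι.app k = f := by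
  obtain ⟨n₀, f', hf⟩ := h2 a ha u hu c hc f
  refine ⟨max n₀ m, le_max_right _ _, f' ≫ u.map (homOfLE (le_max_left n₀ m)), ?_⟩
  rw [Category.assoc, c.w]; exact hf

/-- under (L0)–(L2), the colimit of a sequence `u` in `K` is `K`-generic
iff `u` is a weak Fraïssé sequence in `K`. -/
theorem isGeneric_iff_isWeakFraisseSeqIn (K : Set L)
    (h0 : CondL0 L) (h1 : CondL1 K) (h2 : CondL2 K)
    (u : ℕ ⥤ L) (hu : SeqIn K u) (c : Cocone u) (hc : IsColimit c) :
    IsGeneric K c.pt ↔ IsWeakFraisseSeqIn K u := by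
  constructor
  · rintro ⟨hg1, hg2⟩
    constructor
    · intro x hx
      obtain ⟨e⟩ := hg1 x hx
      obtain ⟨n, f', -⟩ := h2 x hx u hu c hc e
      exact ⟨n, ⟨f'⟩⟩
    · intro n
      obtain ⟨b, hb, i, hi⟩ := hg2 (u.obj n) (hu n) (c.ι.app n)
      obtain ⟨g0, hg0⟩ := hi b hb (𝟙 b)
      rw [Category.id_comp] at hg0
      obtain ⟨m, hnm, g'', hgm⟩ := factor_ge h2 hb u hu c hc g0 n
      have key : i ≫ g'' = u.map (homOfLE hnm) := by
        haveI := h0 (c.ι.app m)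
        rw [← cancel_mono (c.ι.app m), Category.assoc, hgm, hg0, c.w]
      refine ⟨m, hnm, ?_⟩
      intro y hy f
      obtain ⟨g, hgeq⟩ := hi y hy (g'' ≫ f)
      obtain ⟨k, hmk, h, hk⟩ := factor_ge h2 hy u hu c hc g m
      refine ⟨k, hmk, h, ?_⟩
      haveI := h0 (c.ι.app k)
      rw [← cancel_mono (c.ι.app k)]
      have : u.map (homOfLE hnm) ≫ (f ≫ h) ≫ c.ι.app k = u.map (homOfLE hnm) ≫ f ≫ g := by
        simp only [Category.assoc, hk]
      calc (u.map (homOfLE hnm) ≫ f ≫ h) ≫ c.ι.app k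
          = u.map (homOfLE hnm) ≫ f ≫ g := by
            simp only [Category.assoc]; rw [hk]
        _ = i ≫ (g'' ≫ f) ≫ g := by rw [← key]; simp only [Category.assoc]
        _ = c.ι.app n := hgeq
        _ = u.map (homOfLE (hnm.trans hmk)) ≫ c.ι.app k := (c.w (homOfLE (hnm.trans hmk))).symm
  · rintro ⟨hf1, hf2⟩
    constructor
    · intro x hx
      obtain ⟨n, ⟨f⟩⟩ := hf1 x hx
      exact ⟨f ≫ c.ι.app n⟩
    · intro a ha e
      obtain ⟨n, e', he⟩ := h2 a ha u hu c hc e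
      obtain ⟨m, hnm, hm⟩ := hf2 n
      refine ⟨u.obj m, hu m, e' ≫ u.map (homOfLE hnm), ?_⟩
      intro y hy f
      obtain ⟨k, hmk, g, hgeq⟩ := hm y hy f
      refine ⟨g ≫ c.ι.app k, ?_⟩
      calc (e' ≫ u.map (homOfLE hnm)) ≫ f ≫ g ≫ c.ι.app k
          = e' ≫ (u.map (homOfLE hnm) ≫ f ≫ g) ≫ c.ι.app k := by
            simp only [Category.assoc]
        _ = e' ≫ u.map (homOfLE (hnm.trans hmk)) ≫ c.ι.app k := by rw [hgeq]
        _ = e' ≫ c.ι.app n := by rw [c.w]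
        _ = e := he
end

section
/- Assume K ⊆ L satisfy conditions (L0)–(L2). If U and V are both K-generic objects in L, then U and V are isomorphic in L. -/
/-!
Write `U = colim u` with `u` a sequence in `K`. Weak injectivity of `U`, read through (L0) and
(L2), says that every `u n` has a later `u m` such that any extension `u m ⟶ y` in `K` returns
into the sequence up to the bonding map `u n ⟶ u m`: `u` is a weak Fraïssé sequence. Between two
weak Fraïssé sequences `u`, `v` a back-and-forth argument produces a zigzag
`u (α k) ⟶ v (β k) ⟶ u (α (k + 1))` along cofinal indices whose triangles commute with the bonding
maps, and the two arrows it induces between the colimits are mutually inverse.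
-/

open CategoryTheory CategoryTheory.Limits

universe v u

variable {L : Type u} [Category.{v} L]

lemma Monotone.final_functor {J I : Type*} [Preorder J] [Preorder I] [IsFilteredOrEmpty J]
    {f : J → I} (hf : Monotone f) (hcofinal : ∀ i, ∃ j, i ≤ f j) : hf.functor.Final :=
  Functor.final_of_exists_of_isFiltered _ (fun i => (hcofinal i).imp fun _ h => ⟨homOfLE h⟩)
    (fun _ _ => ⟨_, 𝟙 _, Subsingleton.elim _ _⟩)

def coconeOfSequence {u : ℕ ⥤ L} {X : L} (φ : ∀ n, u.obj n ⟶ X)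
    (hφ : ∀ n, u.map (homOfLE n.le_succ) ≫ φ (n + 1) = φ n) : Cocone u where
  pt := X
  ι := NatTrans.ofSequence φ fun n => by simpa using hφ n

theorem nonempty_iso_of_zigzag {u v : ℕ ⥤ L} {cu : Cocone u} {cv : Cocone v}
    (hcu : IsColimit cu) (hcv : IsColimit cv)
    (F : ∀ n, u.obj n ⟶ v.obj n) (G : ∀ n, v.obj n ⟶ u.obj (n + 1))
    (hFG : ∀ n, F n ≫ G n = u.map (homOfLE n.le_succ))
    (hGF : ∀ n, G n ≫ F (n + 1) = v.map (homOfLE n.le_succ)) :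
    Nonempty (cu.pt ≅ cv.pt) := by
  let Φ : cu.pt ⟶ cv.pt :=
    hcu.desc (coconeOfSequence (fun n => F n ≫ cv.ι.app n) fun n => by
      rw [← hFG, Category.assoc, reassoc_of% hGF, cv.w])
  let Ψ : cv.pt ⟶ cu.pt :=
    hcv.desc (coconeOfSequence (fun n => G n ≫ cu.ι.app (n + 1)) fun n => by
      rw [← hGF, Category.assoc, reassoc_of% hFG, cu.w])
  have hΦ : ∀ n, cu.ι.app n ≫ Φ = F n ≫ cv.ι.app n := hcu.fac _
  have hΨ : ∀ n, cv.ι.app n ≫ Ψ = G n ≫ cu.ι.app (n + 1) := hcv.fac _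
  refine ⟨⟨Φ, Ψ, hcu.hom_ext fun n => ?_, hcv.hom_ext fun n => ?_⟩⟩
  · rw [reassoc_of% hΦ, hΨ, reassoc_of% hFG, cu.w, Category.comp_id]
  · rw [reassoc_of% hΨ, hΦ, reassoc_of% hGF, cv.w, Category.comp_id]

def IsGoodOver (K : Set L) (u : ℕ ⥤ L) {n m : ℕ} (h : n ≤ m) : Prop :=
  ∀ y ∈ K, ∀ f : u.obj m ⟶ y, ∃ (k : ℕ) (hmk : m ≤ k) (g : y ⟶ u.obj k),
    u.map (homOfLE h) ≫ f ≫ g = u.map (homOfLE (h.trans hmk))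

variable {K : Set L}

lemma IsGoodOver.of_le {u : ℕ ⥤ L} {n m : ℕ} {h : n ≤ m} (hgood : IsGoodOver K u h)
    {n' : ℕ} (h' : n' ≤ n) : IsGoodOver K u (h'.trans h) := by
  intro y hy f
  obtain ⟨k, hmk, g, hg⟩ := hgood y hy f
  refine ⟨k, hmk, g, ?_⟩
  rw [← homOfLE_comp h' h, u.map_comp, Category.assoc, hg, ← u.map_comp, homOfLE_comp]

lemma IsWeakFraisseSeqIn.exists_isGoodOver_gt {u : ℕ ⥤ L} (hu : IsWeakFraisseSeqIn K u)
    (n : ℕ) : ∃ m, ∃ h : n < m, IsGoodOver K u h.le := by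
  obtain ⟨m, h, hgood⟩ := hu.2 (n + 1)
  exact ⟨m, h, IsGoodOver.of_le hgood n.le_succ⟩

/-- The good prefix `u n ⟶ u mid` of `hom` is what lets the back-and-forth return from `v`
to `u`. -/
structure GoodArrow (K : Set L) (u v : ℕ ⥤ L) (n : ℕ) where
  mid : ℕ
  lt_mid : n < mid
  isGoodOver : IsGoodOver K u lt_mid.le
  tgt : ℕ
  tail : u.obj mid ⟶ v.obj tgt

def GoodArrow.hom {u v : ℕ ⥤ L} {n : ℕ} (p : GoodArrow K u v n) : u.obj n ⟶ v.obj p.tgt :=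
  u.map (homOfLE p.lt_mid.le) ≫ p.tail

lemma nonempty_goodArrow {u v : ℕ ⥤ L} (hu : SeqIn K u)
    (hgood : ∀ n, ∃ m, ∃ h : n < m, IsGoodOver K u h.le)
    (hv : ∀ x ∈ K, ∃ n, Nonempty (x ⟶ v.obj n)) (n : ℕ) : Nonempty (GoodArrow K u v n) := by
  obtain ⟨m, hm, hgood_m⟩ := hgood n
  obtain ⟨b, ⟨f⟩⟩ := hv (u.obj m) (hu m)
  exact ⟨⟨m, hm, hgood_m, b, f⟩⟩

lemma GoodArrow.exists_back {u v : ℕ ⥤ L} (hv : SeqIn K v)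
    (hgood : ∀ n, ∃ m, ∃ h : n < m, IsGoodOver K v h.le) {n : ℕ} (p : GoodArrow K u v n) :
    ∃ (q : GoodArrow K v u p.tgt) (h : n < q.tgt), p.hom ≫ q.hom = u.map (homOfLE h.le) := by
  obtain ⟨b, hb, hgood_b⟩ := hgood p.tgt
  obtain ⟨k, hk, g, hg⟩ := p.isGoodOver (v.obj b) (hv b) (p.tail ≫ v.map (homOfLE hb.le))
  refine ⟨⟨b, hb, hgood_b, k, g⟩, p.lt_mid.trans_le hk, ?_⟩
  simpa only [GoodArrow.hom, Category.assoc] using hg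

theorem IsWeakFraisseSeqIn.nonempty_iso {u v : ℕ ⥤ L} (hu : SeqIn K u) (hv : SeqIn K v)
    (hFu : IsWeakFraisseSeqIn K u) (hFv : IsWeakFraisseSeqIn K v)
    {cu : Cocone u} {cv : Cocone v} (hcu : IsColimit cu) (hcv : IsColimit cv) :
    Nonempty (cu.pt ≅ cv.pt) := by
  obtain ⟨p₀⟩ := nonempty_goodArrow hu hFu.exists_isGoodOver_gt hFv.1 0
  choose back hback using
    fun n (p : GoodArrow K u v n) => p.exists_back hv hFv.exists_isGoodOver_gt
  choose forth hforth using
    fun n (q : GoodArrow K v u n) => q.exists_back hu hFu.exists_isGoodOver_gt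
  let S : ℕ → Σ n, GoodArrow K u v n := fun k =>
    Nat.rec ⟨0, p₀⟩ (fun _ s => ⟨(back s.1 s.2).tgt, forth _ (back s.1 s.2)⟩) k
  have hα : StrictMono fun k => (S k).1 :=
    strictMono_nat_of_lt_succ fun k => (hback _ (S k).2).1
  have hβ : StrictMono fun k => (S k).2.tgt :=
    strictMono_nat_of_lt_succ fun k => (hforth _ (back _ (S k).2)).1
  have := hα.monotone.final_functor fun i => ⟨i, hα.le_apply⟩
  have := hβ.monotone.final_functor fun i => ⟨i, hβ.le_apply⟩
  exact nonempty_iso_of_zigzag (u := hα.monotone.functor ⋙ u) (v := hβ.monotone.functor ⋙ v)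
    ((Functor.Final.isColimitWhiskerEquiv _ _).symm hcu)
    ((Functor.Final.isColimitWhiskerEquiv _ _).symm hcv) (fun k => (S k).2.hom)
    (fun k => (back _ (S k).2).hom) (fun k => (hback _ _).2) (fun k => (hforth _ _).2)

lemma CondL2.exists_factor_ge (h2 : CondL2 K) {u : ℕ ⥤ L} (hu : SeqIn K u) {c : Cocone u}
    (hc : IsColimit c) {a : L} (ha : a ∈ K) (f : a ⟶ c.pt) (n₀ : ℕ) :
    ∃ n, ∃ _ : n₀ ≤ n, ∃ f' : a ⟶ u.obj n, f' ≫ c.ι.app n = f := by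
  obtain ⟨n, f', hf⟩ := h2 a ha u hu c hc f
  exact ⟨max n₀ n, le_max_left _ _, f' ≫ u.map (homOfLE (le_max_right n₀ n)),
    by rw [Category.assoc, c.w, hf]⟩

lemma exists_isGoodOver_of_weaklyInjective (h0 : CondL0 L) (h2 : CondL2 K) {u : ℕ ⥤ L}
    (hu : SeqIn K u) {c : Cocone u} (hc : IsColimit c) (hU : WeaklyInjective K c.pt) (n : ℕ) :
    ∃ m, ∃ h : n ≤ m, IsGoodOver K u h := by
  obtain ⟨b, hb, i, hi⟩ := hU (u.obj n) (hu n) (c.ι.app n)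
  obtain ⟨g, hg⟩ := hi b hb (𝟙 b)
  obtain ⟨m, hnm, t, ht⟩ := h2.exists_factor_ge hu hc hb g n
  have hit : i ≫ t = u.map (homOfLE hnm) := by
    have := h0 (c.ι.app m)
    rw [← cancel_mono (c.ι.app m), Category.assoc, ht, c.w]
    simpa using hg
  refine ⟨m, hnm, fun y hy f => ?_⟩
  obtain ⟨g', hg'⟩ := hi y hy (t ≫ f)
  obtain ⟨k, hmk, s, hs⟩ := h2.exists_factor_ge hu hc hy g' m
  have := h0 (c.ι.app k)
  refine ⟨k, hmk, s, ?_⟩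
  rw [← cancel_mono (c.ι.app k), c.w, ← hit]
  simpa [hs] using hg'

lemma isWeakFraisseSeqIn_of_isGeneric (h0 : CondL0 L) (h2 : CondL2 K) {u : ℕ ⥤ L}
    (hu : SeqIn K u) {c : Cocone u} (hc : IsColimit c) (hU : IsGeneric K c.pt) :
    IsWeakFraisseSeqIn K u := by
  refine ⟨fun x hx => ?_, exists_isGoodOver_of_weaklyInjective h0 h2 hu hc hU.2⟩
  obtain ⟨e⟩ := hU.1 x hx
  obtain ⟨n, f, -⟩ := h2 x hx u hu c hc e
  exact ⟨n, ⟨f⟩⟩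

/-- under (L0)–(L2), the `K`-generic object is unique up to
isomorphism. -/
theorem isGeneric_unique (K : Set L)
    (h0 : CondL0 L) (h1 : CondL1 K) (h2 : CondL2 K)
    (U V : L) (hU : IsGeneric K U) (hV : IsGeneric K V) :
    Nonempty (U ≅ V) := by
  obtain ⟨u, hu, cu, rfl, ⟨hcu⟩⟩ := h1.2 U
  obtain ⟨v, hv, cv, rfl, ⟨hcv⟩⟩ := h1.2 V
  exact IsWeakFraisseSeqIn.nonempty_iso hu hv (isWeakFraisseSeqIn_of_isGeneric h0 h2 hu hcu hU)
    (isWeakFraisseSeqIn_of_isGeneric h0 h2 hv hcv hV) hcu hcv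
end

section
/- Assume K ⊆ L satisfy conditions (L0)–(L2) and let U be a K-generic object. If X is the colimit in L of a sequence x in K such that each bonding arrow x_n^{n+1} is amalgamable in K, then there exists an L-arrow from X to U. -/
open CategoryTheory CategoryTheory.Limits

universe v u

variable {L : Type u} [Category.{v} L]

/-- under (L0)–(L2), if `U` is `K`-generic and `X` is the colimit of a
sequence in `K` with amalgamable consecutive bonding arrows, then there is an
`L`-arrow from `X` to `U`. -/
theorem exists_arrow_into_generic (K : Set L)
    (h0 : CondL0 L) (h1 : CondL1 K) (h2 : CondL2 K)
    (U : L) (hU : IsGeneric K U)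
    (x : ℕ ⥤ L) (hx : SeqIn K x)
    (hamalg : ∀ n : ℕ, AmalgamableIn K (x.map (homOfLE (Nat.le_succ n))))
    (c : Cocone x) (hc : IsColimit c) :
    Nonempty (c.pt ⟶ U) := by
  classical
  -- step: from an arrow `x.obj (n+1) ⟶ U` produce one from `x.obj (n+2)`
  -- compatible over `x.obj n`.
  have step : ∀ (n : ℕ) (en : x.obj (n+1) ⟶ U), ∃ e' : x.obj (n+2) ⟶ U,
      x.map (homOfLE (by omega : n ≤ n+2)) ≫ e' =
        x.map (homOfLE (Nat.le_succ n)) ≫ en := by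
    intro n en
    obtain ⟨b, hb, i, hi⟩ := hU.2 _ (hx (n+1)) en
    obtain ⟨w, hw, f', g', hcomm⟩ :=
      hamalg n b hb (x.obj (n+2)) (hx (n+2)) i (x.map (homOfLE (Nat.le_succ (n+1))))
    obtain ⟨g, hg⟩ := hi w hw f'
    refine ⟨g' ≫ g, ?_⟩
    have hsplit : x.map (homOfLE (by omega : n ≤ n+2)) =
        x.map (homOfLE (Nat.le_succ n)) ≫ x.map (homOfLE (Nat.le_succ (n+1))) := by
      rw [← x.map_comp, homOfLE_comp]
    rw [hsplit]
    simp only [Category.assoc]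
    rw [← hg]
    have := congrArg (· ≫ g) hcomm
    simpa [Category.assoc] using this.symm
  choose next hnext using step
  obtain ⟨e1⟩ := hU.1 _ (hx 1)
  let e : (n : ℕ) → (x.obj (n+1) ⟶ U) := fun n => Nat.rec e1 (fun k ek => next k ek) n
  have he : ∀ n : ℕ, x.map (homOfLE (by omega : n ≤ n+2)) ≫ e (n+1) =
      x.map (homOfLE (Nat.le_succ n)) ≫ e n := fun n => hnext n (e n)
  -- the cocone arrows
  set φ : (n : ℕ) → (x.obj n ⟶ U) :=
    fun n => x.map (homOfLE (Nat.le_succ n)) ≫ e n with hφ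
  have hstep : ∀ n : ℕ, x.map (homOfLE (Nat.le_succ n)) ≫ φ (n+1) = φ n := by
    intro n
    have : x.map (homOfLE (Nat.le_succ n)) ≫
        x.map (homOfLE (Nat.le_succ (n+1))) ≫ e (n+1) =
        x.map (homOfLE (by omega : n ≤ n+2)) ≫ e (n+1) := by
      rw [← Category.assoc, ← x.map_comp, homOfLE_comp]
    simp only [hφ]
    rw [this, he n]
  have key : ∀ (n m : ℕ) (h : n ≤ m), x.map (homOfLE h) ≫ φ m = φ n := by
    intro n m h
    induction m, h using Nat.le_induction with
    | base =>
        have : homOfLE (le_refl n) = 𝟙 (n : ℕ) := rfl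
        rw [this, x.map_id, Category.id_comp]
    | succ m hm ih =>
        have hsplit : (homOfLE (by omega : n ≤ m+1)) =
            homOfLE hm ≫ homOfLE (Nat.le_succ m) := by
          apply Subsingleton.elim
        rw [hsplit, x.map_comp, Category.assoc, hstep m, ih]
  refine ⟨hc.desc ⟨U, ⟨fun n => φ n, ?_⟩⟩⟩
  intro n m f
  have : f = homOfLE (leOfHom f) := Subsingleton.elim _ _
  rw [this]
  simpa using key n m (leOfHom f)
end

section
/- Assume K ⊆ L satisfy conditions (L0)–(L2). Let U be a K-generic object and let e : a → b be an amalgamable arrow in K. Then for every pair of L-arrows i : b → U and j : b → U there exists an automorphism h : U → U in L satisfying h ∘ i ∘ e = j ∘ e. -/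
open CategoryTheory CategoryTheory.Limits

universe v u

variable {L : Type u} [Category.{v} L]

/-!
Write the generic object as the colimit `U` of a sequence `u` in `K`. Weak injectivity of `U`,
pulled back into the sequence by (L2) and made exact by (L0), shows that each stage `u n` has a
later bonding arrow `u n ⟶ u m` after which every continuation into `K` can be led back into the
sequence: an absorbing arrow. Amalgamating `i` and `j` over `e` and absorbing the result gives an
absorbing arrow `u s ⟶ u t` that equalises `i` and `j` after `e`. Absorbing forth and back
alternately extends it to a zig-zag `u p₀ ⟶ u q₀ ⟶ u p₁ ⟶ ⋯` whose triangles are bonding arrows;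
the two halves of the zig-zag induce mutually inverse endomorphisms of `U`.
-/

section Sequences

variable {u : ℕ ⥤ L} {c : Cocone u}

lemma Monotone.final_functor_of_unbounded {φ : ℕ → ℕ} (hφ : Monotone φ)
    (hunb : ∀ n, ∃ k, n ≤ φ k) : hφ.functor.Final :=
  Functor.final_of_exists_of_isFiltered _ (fun n => (hunb n).imp fun _ hk => ⟨homOfLE hk⟩)
    (fun _ _ => ⟨_, 𝟙 _, Subsingleton.elim _ _⟩)

noncomputable def isColimitWhiskerOfUnbounded (hc : IsColimit c) {φ : ℕ → ℕ} (hφ : Monotone φ)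
    (hunb : ∀ n, ∃ k, n ≤ φ k) : IsColimit (c.whisker hφ.functor) :=
  have := hφ.final_functor_of_unbounded hunb
  (Functor.Final.isColimitWhiskerEquiv hφ.functor c).symm hc

lemma exists_hom_of_backAndForth (hc : IsColimit c) {p q : ℕ → ℕ}
    (hpq : ∀ k, p k ≤ q k) (hqp : ∀ k, q k ≤ p (k + 1)) (hunb : ∀ n, ∃ k, n ≤ p k)
    (f : ∀ k, u.obj (p k) ⟶ u.obj (q k)) (g : ∀ k, u.obj (q k) ⟶ u.obj (p (k + 1)))
    (hfg : ∀ k, f k ≫ g k = u.map (homOfLE ((hpq k).trans (hqp k))))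
    (hgf : ∀ k, g k ≫ f (k + 1) = u.map (homOfLE ((hqp k).trans (hpq (k + 1))))) :
    ∃ h : c.pt ⟶ c.pt, ∀ k, c.ι.app (p k) ≫ h = f k ≫ c.ι.app (q k) := by
  have hp : Monotone p := monotone_nat_of_le_succ fun k => (hpq k).trans (hqp k)
  let s : Cocone (hp.functor ⋙ u) :=
    { pt := c.pt
      ι := NatTrans.ofSequence (fun k => f k ≫ c.ι.app (q k)) fun k => by
        change u.map (homOfLE ((hpq k).trans (hqp k))) ≫ f (k + 1) ≫ c.ι.app (q (k + 1))
          = (f k ≫ c.ι.app (q k)) ≫ 𝟙 c.pt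
        rw [← hfg, Category.assoc, reassoc_of% (hgf k), c.w]
        exact (Category.comp_id _).symm }
  exact ⟨(isColimitWhiskerOfUnbounded hc hp hunb).desc s,
    (isColimitWhiskerOfUnbounded hc hp hunb).fac s⟩

lemma hom_ext_of_unbounded (hc : IsColimit c) {p : ℕ → ℕ} (hunb : ∀ n, ∃ k, n ≤ p k) {X : L}
    {x y : c.pt ⟶ X} (h : ∀ k, c.ι.app (p k) ≫ x = c.ι.app (p k) ≫ y) : x = y := by
  refine hc.hom_ext fun n => ?_
  obtain ⟨k, hk⟩ := hunb n
  rw [← c.w (homOfLE hk), Category.assoc, Category.assoc, h]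

lemma exists_iso_of_backAndForth (hc : IsColimit c) {p q : ℕ → ℕ}
    (hpq : ∀ k, p k ≤ q k) (hqp : ∀ k, q k ≤ p (k + 1)) (hunb : ∀ n, ∃ k, n ≤ p k)
    (f : ∀ k, u.obj (p k) ⟶ u.obj (q k)) (g : ∀ k, u.obj (q k) ⟶ u.obj (p (k + 1)))
    (hfg : ∀ k, f k ≫ g k = u.map (homOfLE ((hpq k).trans (hqp k))))
    (hgf : ∀ k, g k ≫ f (k + 1) = u.map (homOfLE ((hqp k).trans (hpq (k + 1))))) :
    ∃ h : c.pt ≅ c.pt, ∀ k, c.ι.app (p k) ≫ h.hom = f k ≫ c.ι.app (q k) := by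
  have hunb' : ∀ n, ∃ k, n ≤ q k := fun n => (hunb n).imp fun k hk => hk.trans (hpq k)
  obtain ⟨h, hh⟩ := exists_hom_of_backAndForth hc hpq hqp hunb f g hfg hgf
  obtain ⟨h', hh'⟩ := exists_hom_of_backAndForth hc (p := q) (q := fun k => p (k + 1))
    hqp (fun k => hpq (k + 1)) hunb' g (fun k => f (k + 1)) hgf (fun k => hfg (k + 1))
  refine ⟨⟨h, h', hom_ext_of_unbounded hc hunb fun k => ?_,
    hom_ext_of_unbounded hc hunb' fun k => ?_⟩, hh⟩
  · rw [reassoc_of% (hh k), hh' k, reassoc_of% (hfg k), c.w]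
    exact (Category.comp_id _).symm
  · rw [reassoc_of% (hh' k), hh (k + 1), reassoc_of% (hgf k), c.w]
    exact (Category.comp_id _).symm

end Sequences

section Absorption

variable (K : Set L) (u : ℕ ⥤ L)

def IsAbsorbing {s : ℕ} {X : L} (φ : u.obj s ⟶ X) : Prop :=
  ∀ y ∈ K, ∀ f : X ⟶ y, ∃ k, ∃ hsk : s ≤ k, ∃ g : y ⟶ u.obj k, φ ≫ f ≫ g = u.map (homOfLE hsk)

/-- Condition (G2) of `IsWeakFraisseSeqIn`. -/
def HasAbsorbingBonds : Prop :=
  ∀ n, ∃ m, ∃ hnm : n ≤ m, IsAbsorbing K u (u.map (homOfLE hnm))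

variable {K u}

lemma IsAbsorbing.comp {s : ℕ} {X Y : L} {φ : u.obj s ⟶ X} (hφ : IsAbsorbing K u φ)
    (g : X ⟶ Y) : IsAbsorbing K u (φ ≫ g) := by
  intro y hy f
  simpa only [Category.assoc] using hφ y hy (g ≫ f)

lemma IsAbsorbing.exists_ge {s : ℕ} {X : L} {φ : u.obj s ⟶ X} (hφ : IsAbsorbing K u φ)
    {y : L} (hy : y ∈ K) (f : X ⟶ y) (N : ℕ) :
    ∃ k, ∃ hsk : s ≤ k, N ≤ k ∧ ∃ g : y ⟶ u.obj k, φ ≫ f ≫ g = u.map (homOfLE hsk) := by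
  obtain ⟨k, hsk, g, hg⟩ := hφ y hy f
  refine ⟨max k N, hsk.trans (le_max_left _ _), le_max_right _ _,
    g ≫ u.map (homOfLE (le_max_left _ _)), ?_⟩
  rw [reassoc_of% hg, ← u.map_comp, homOfLE_comp]

variable (K u) in
structure AbsorbingArrow (s : ℕ) where
  tgt : ℕ
  lt : s < tgt
  hom : u.obj s ⟶ u.obj tgt
  absorbing : IsAbsorbing K u hom

lemma AbsorbingArrow.exists_comp_eq (hu : SeqIn K u) (hbonds : HasAbsorbingBonds K u) {s : ℕ}
    (a : AbsorbingArrow K u s) :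
    ∃ b : AbsorbingArrow K u a.tgt, a.hom ≫ b.hom = u.map (homOfLE (a.lt.trans b.lt).le) := by
  obtain ⟨m, htm, hm⟩ := hbonds a.tgt
  obtain ⟨r, hsr, htr, g, hg⟩ := a.absorbing.exists_ge (hu m) (u.map (homOfLE htm)) (a.tgt + 1)
  exact ⟨⟨r, htr, u.map (homOfLE htm) ≫ g, hm.comp g⟩, hg⟩

lemma exists_iso_of_absorbingArrow (hu : SeqIn K u) (hbonds : HasAbsorbingBonds K u)
    {c : Cocone u} (hc : IsColimit c) {s : ℕ} (a : AbsorbingArrow K u s) :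
    ∃ h : c.pt ≅ c.pt, c.ι.app s ≫ h.hom = a.hom ≫ c.ι.app a.tgt := by
  choose next hnext using fun s (a : AbsorbingArrow K u s) => a.exists_comp_eq hu hbonds
  -- each step of `chain` absorbs once forth and once back
  let chain : ℕ → Σ s, AbsorbingArrow K u s :=
    fun k => Nat.rec ⟨s, a⟩ (fun _ x => ⟨_, next _ (next _ x.2)⟩) k
  have hmono : StrictMono fun k => (chain k).1 :=
    strictMono_nat_of_lt_succ fun k => (chain k).2.lt.trans (next _ (chain k).2).lt
  obtain ⟨h, hh⟩ := exists_iso_of_backAndForth hc (p := fun k => (chain k).1)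
    (q := fun k => (chain k).2.tgt) (fun k => (chain k).2.lt.le)
    (fun k => (next _ (chain k).2).lt.le) (fun n => ⟨n, hmono.id_le n⟩)
    (fun k => (chain k).2.hom) (fun k => (next _ (chain k).2).hom)
    (fun k => hnext _ _) (fun k => hnext _ _)
  exact ⟨h, hh 0⟩

end Absorption

section Generic

variable {K : Set L} {u : ℕ ⥤ L} {c : Cocone u}

lemma CondL2.exists_comp_ι_eq_of_le (h2 : CondL2 K) (hu : SeqIn K u) (hc : IsColimit c)
    {a : L} (ha : a ∈ K) (f : a ⟶ c.pt) (N : ℕ) :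
    ∃ n, N ≤ n ∧ ∃ f' : a ⟶ u.obj n, f' ≫ c.ι.app n = f := by
  obtain ⟨n, f', hf'⟩ := h2 a ha u hu c hc f
  exact ⟨max n N, le_max_right _ _, f' ≫ u.map (homOfLE (le_max_left _ _)),
    by rw [Category.assoc, c.w, hf']⟩

lemma hasAbsorbingBonds_of_weaklyInjective (h0 : CondL0 L) (h2 : CondL2 K) (hu : SeqIn K u)
    (hc : IsColimit c) (hinj : WeaklyInjective K c.pt) : HasAbsorbingBonds K u := by
  intro n
  obtain ⟨b, hb, ι, hι⟩ := hinj _ (hu n) (c.ι.app n)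
  obtain ⟨g₀, hg₀⟩ := hι b hb (𝟙 b)
  obtain ⟨m, hnm, q, hq⟩ := h2.exists_comp_ι_eq_of_le hu hc hb g₀ n
  have hιq : ι ≫ q = u.map (homOfLE hnm) := by
    have := h0 (c.ι.app m)
    rw [← cancel_mono (c.ι.app m), c.w, Category.assoc, hq, ← hg₀, Category.id_comp]
  refine ⟨m, hnm, fun y hy f => ?_⟩
  obtain ⟨g₁, hg₁⟩ := hι y hy (q ≫ f)
  obtain ⟨k, hnk, g, hg⟩ := h2.exists_comp_ι_eq_of_le hu hc hy g₁ n
  refine ⟨k, hnk, g, ?_⟩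
  have := h0 (c.ι.app k)
  rw [← cancel_mono (c.ι.app k), c.w, ← hιq, ← hg₁, ← hg]
  simp only [Category.assoc]

lemma exists_absorbingArrow_of_amalgamable (hu : SeqIn K u) (hbonds : HasAbsorbingBonds K u)
    {a b : L} {e : a ⟶ b} (he : AmalgamableIn K e) {s : ℕ} (i j : b ⟶ u.obj s) :
    ∃ φ : AbsorbingArrow K u s, e ≫ i ≫ φ.hom = e ≫ j ≫ u.map (homOfLE φ.lt.le) := by
  obtain ⟨m, hsm, hm⟩ := hbonds s
  obtain ⟨w, hw, α, β, hαβ⟩ :=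
    he _ (hu m) _ (hu m) (i ≫ u.map (homOfLE hsm)) (j ≫ u.map (homOfLE hsm))
  obtain ⟨t, hst, hst', g, hg⟩ := hm.exists_ge hw β (s + 1)
  refine ⟨⟨t, hst', u.map (homOfLE hsm) ≫ α ≫ g, hm.comp (α ≫ g)⟩, ?_⟩
  simp only [Category.assoc] at hαβ
  rw [reassoc_of% hαβ, hg]

end Generic

theorem generic_weakly_homogeneous_general (K : Set L)
    (h0 : CondL0 L) (h1 : CondL1 K) (h2 : CondL2 K)
    (U : L) (hU : IsGeneric K U)
    {a b : L} (hb : b ∈ K) (e : a ⟶ b)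
    (he : AmalgamableIn K e) (i j : b ⟶ U) :
    ∃ h : U ≅ U, e ≫ i ≫ h.hom = e ≫ j := by
  obtain ⟨u, hu, c, rfl, ⟨hc⟩⟩ := h1.2 U
  have hbonds := hasAbsorbingBonds_of_weaklyInjective h0 h2 hu hc hU.2
  obtain ⟨s, i', hi'⟩ := h2 b hb u hu c hc i
  obtain ⟨t, hst, j', hj'⟩ := h2.exists_comp_ι_eq_of_le hu hc hb j s
  obtain ⟨φ, hφ⟩ :=
    exists_absorbingArrow_of_amalgamable hu hbonds he (i' ≫ u.map (homOfLE hst)) j'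
  obtain ⟨h, hh⟩ := exists_iso_of_absorbingArrow hu hbonds hc φ
  refine ⟨h, ?_⟩
  calc e ≫ i ≫ h.hom = e ≫ (i' ≫ u.map (homOfLE hst)) ≫ c.ι.app t ≫ h.hom := by
        rw [← hi', ← c.w (homOfLE hst)]
        simp only [Category.assoc]
    _ = e ≫ j' ≫ u.map (homOfLE φ.lt.le) ≫ c.ι.app φ.tgt := by
        rw [hh]
        simpa only [Category.assoc] using hφ =≫ c.ι.app φ.tgt
    _ = e ≫ j := by rw [c.w, hj']

/-- weak homogeneity of the `K`-generic object: given an amalgamable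
`K`-arrow `e : a ⟶ b` and `L`-arrows `i, j : b ⟶ U`, there is an automorphism `h`
of `U` with `h ∘ i ∘ e = j ∘ e`. -/
theorem generic_weakly_homogeneous (K : Set L)
    (h0 : CondL0 L) (h1 : CondL1 K) (h2 : CondL2 K)
    (U : L) (hU : IsGeneric K U)
    {a b : L} (ha : a ∈ K) (hb : b ∈ K) (e : a ⟶ b)
    (he : AmalgamableIn K e) (i j : b ⟶ U) :
    ∃ h : U ≅ U, e ≫ i ≫ h.hom = e ≫ j :=
  generic_weakly_homogeneous_general K h0 h1 h2 U hU hb e he i j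
end

section
/- Assume K ⊆ L satisfy conditions (L0)–(L2). Let V be an L-object and let K_V be the age of V relative to K. Then the following are equivalent: (a) V is weakly homogeneous; (b) V is weakly K_V-injective; (c) K_V is a weak Fraïssé category and V is K_V-generic, i.e., every K_V-object admits an L-arrow into V and V is weakly K_V-injective. -/
open CategoryTheory CategoryTheory.Limits

universe v u

variable {L : Type u} [Category.{v} L]

/-- The age of an `L`-object `V` relative to `K`. -/
def age (K : Set L) (V : L) : Set L := {x | x ∈ K ∧ Nonempty (x ⟶ V)}

/-- `V` is weakly homogeneous. -/
def WeaklyHomogeneous (K : Set L) (V : L) : Prop :=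
  ∀ a ∈ K, ∀ f : a ⟶ V, ∃ b ∈ K, ∃ (e : a ⟶ b) (i : b ⟶ V), e ≫ i = f ∧
    ∀ j : b ⟶ V, ∃ h : V ≅ V, e ≫ j ≫ h.hom = f


section AuxGen

/-- Arrows generated by "triangles over the cocone `c`": the basic arrows are those
`h : u.obj n ⟶ u.obj m` with `h ≫ c.ι.app m = c.ι.app n`, closed under composition. -/
inductive GenHom (u : ℕ ⥤ L) (c : Cocone u) : ∀ a b : L, (a ⟶ b) → Prop
  | basic (n m : ℕ) (h : u.obj n ⟶ u.obj m) (hh : h ≫ c.ι.app m = c.ι.app n) :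
      GenHom u c (u.obj n) (u.obj m) h
  | comp {a b d : L} {f : a ⟶ b} {g : b ⟶ d} :
      GenHom u c a b f → GenHom u c b d g → GenHom u c a d (f ≫ g)

lemma GenHom.src_tgt {u : ℕ ⥤ L} {c : Cocone u} {a b : L} {f : a ⟶ b}
    (h : GenHom u c a b f) : a ∈ Set.range u.obj ∧ b ∈ Set.range u.obj := by
  induction h with
  | basic n m g hg => exact ⟨⟨n, rfl⟩, ⟨m, rfl⟩⟩
  | comp hf hg ihf ihg => exact ⟨ihf.1, ihg.2⟩

/-- Encodings of composites of basic arrows by lists of index pairs. -/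
def EList (u : ℕ ⥤ L) (c : Cocone u) : List (ℕ × ℕ) → ∀ a b : L, Set (a ⟶ b)
  | [], a, b => {h | ∃ hab : a = b, h = eqToHom hab}
  | (n, m) :: l, a, b => {h | ∃ (ha : a = u.obj n) (g : u.obj n ⟶ u.obj m),
      g ≫ c.ι.app m = c.ι.app n ∧ ∃ t ∈ EList u c l (u.obj m) b, h = eqToHom ha ≫ g ≫ t}

lemma EList_subsingleton (h0 : CondL0 L) (u : ℕ ⥤ L) (c : Cocone u) :
    ∀ (l : List (ℕ × ℕ)) (a b : L), (EList u c l a b).Subsingleton := by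
  intro l
  induction l with
  | nil =>
    rintro a b x ⟨rfl, rfl⟩ y ⟨-, rfl⟩
    rfl
  | cons p l ih =>
    obtain ⟨n, m⟩ := p
    rintro a b x ⟨ha, g1, hg1, t1, ht1, rfl⟩ y ⟨ha2, g2, hg2, t2, ht2, rfl⟩
    have hg : g1 = g2 := (h0 (c.ι.app m)).right_cancellation _ _ (hg1.trans hg2.symm)
    have ht : t1 = t2 := ih (u.obj m) b ht1 ht2
    rw [hg, ht]

lemma EList_eqToHom {u : ℕ ⥤ L} {c : Cocone u} {l : List (ℕ × ℕ)} {b d : L} {g : b ⟶ d}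
    (hg : g ∈ EList u c l b d) {a : L} (hab : a = b) :
    (eqToHom hab ≫ g) ∈ EList u c l a d := by
  subst hab; simpa using hg

lemma EList_append {u : ℕ ⥤ L} {c : Cocone u} :
    ∀ {l1 l2 : List (ℕ × ℕ)} {a b d : L} {f : a ⟶ b} {g : b ⟶ d},
      f ∈ EList u c l1 a b → g ∈ EList u c l2 b d → (f ≫ g) ∈ EList u c (l1 ++ l2) a d := by
  intro l1
  induction l1 with
  | nil =>
    rintro l2 a b d f g ⟨hab, rfl⟩ hg
    exact EList_eqToHom hg hab
  | cons p l ih =>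
    obtain ⟨n, m⟩ := p
    rintro l2 a b d f g ⟨ha, g1, hg1, t, ht, rfl⟩ hg
    exact ⟨ha, g1, hg1, t ≫ g, ih ht hg, by simp⟩

lemma GenHom.exists_list {u : ℕ ⥤ L} {c : Cocone u} {a b : L} {f : a ⟶ b}
    (h : GenHom u c a b f) : ∃ l, f ∈ EList u c l a b := by
  induction h with
  | basic n m g hg => exact ⟨[(n, m)], rfl, g, hg, 𝟙 _, ⟨rfl, by simp⟩, by simp⟩
  | comp hf hg ihf ihg =>
    obtain ⟨l1, h1⟩ := ihf
    obtain ⟨l2, h2⟩ := ihg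
    exact ⟨l1 ++ l2, EList_append h1 h2⟩

lemma genHom_countable (h0 : CondL0 L) (u : ℕ ⥤ L) (c : Cocone u) (a b : L) :
    {f : a ⟶ b | GenHom u c a b f}.Countable := by
  have hsub : {f : a ⟶ b | GenHom u c a b f} ⊆ ⋃ l : List (ℕ × ℕ), EList u c l a b := by
    intro f hf
    obtain ⟨l, hl⟩ := GenHom.exists_list hf
    exact Set.mem_iUnion.2 ⟨l, hl⟩
  exact Set.Countable.mono hsub
    (Set.countable_iUnion fun l => (EList_subsingleton h0 u c l a b).countable)

end AuxGen

/-- (a) implies (b). -/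
lemma homog_imp_wi (K : Set L) (V : L) (WH : WeaklyHomogeneous K V) :
    WeaklyInjective (age K V) V := by
  intro a ha f
  obtain ⟨b, hbK, e, i, hei, hom⟩ := WH a ha.1 f
  refine ⟨b, ⟨hbK, ⟨i⟩⟩, e, ?_⟩
  intro y hy s
  obtain ⟨k⟩ := hy.2
  obtain ⟨h, hh⟩ := hom (s ≫ k)
  exact ⟨k ≫ h.hom, by simpa using hh⟩

/-- (b) implies (c). -/
lemma wi_imp_fraisse (K : Set L) (h0 : CondL0 L) (h1 : CondL1 K) (h2 : CondL2 K) (V : L)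
    (WI : WeaklyInjective (age K V) V) :
    IsWeakFraisseCatIn (age K V) ∧ IsGeneric (age K V) V := by
  obtain ⟨u, hu, cc, hpt, ⟨hc⟩⟩ := h1.2 V
  subst hpt
  have hA : ∀ n, u.obj n ∈ age K cc.pt := fun n => ⟨hu n, ⟨cc.ι.app n⟩⟩
  have Fact : ∀ x ∈ K, ∀ g : x ⟶ cc.pt, ∃ (m : ℕ) (t : x ⟶ u.obj m),
      t ≫ cc.ι.app m = g := by
    intro x hx g
    obtain ⟨m, t, ht⟩ := h2 x hx u hu cc hc g
    exact ⟨m, t, ht⟩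
  have hdir : DirectedIn (age K cc.pt) := by
    intro x hx y hy
    obtain ⟨fx⟩ := hx.2
    obtain ⟨fy⟩ := hy.2
    obtain ⟨n, tx, -⟩ := Fact x hx.1 fx
    obtain ⟨m, ty, -⟩ := Fact y hy.1 fy
    exact ⟨u.obj (max n m), hA _, ⟨tx ≫ u.map (homOfLE (le_max_left n m))⟩,
      ⟨ty ≫ u.map (homOfLE (le_max_right n m))⟩⟩
  have hwap : HasWAPIn (age K cc.pt) := by
    intro z hz
    obtain ⟨e0⟩ := hz.2
    obtain ⟨b, hb, i, P⟩ := WI z hz e0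
    refine ⟨b, hb, i, ?_⟩
    intro x hx y hy f g
    obtain ⟨p, hp⟩ := P x hx f
    obtain ⟨q, hq⟩ := P y hy g
    obtain ⟨n, p', hp'⟩ := Fact x hx.1 p
    obtain ⟨m, q', hq'⟩ := Fact y hy.1 q
    refine ⟨u.obj (max n m), hA _, p' ≫ u.map (homOfLE (le_max_left n m)),
      q' ≫ u.map (homOfLE (le_max_right n m)), ?_⟩
    refine (h0 (cc.ι.app (max n m))).right_cancellation _ _ ?_
    simp only [Category.assoc, Cocone.w]
    rw [hp', hq', hp, hq]
  refine ⟨⟨hdir, hwap, ?_⟩, fun x hx => hx.2, WI⟩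
  refine ⟨⟨Set.range u.obj, fun a b => {h | GenHom u cc a b h},
    fun hf => (GenHom.src_tgt hf).1, fun hf => (GenHom.src_tgt hf).2, ?_,
    fun hf hg => GenHom.comp hf hg⟩, ⟨Set.countable_range _, genHom_countable h0 u cc⟩,
    ?_, ?_, ?_⟩
  · rintro a ⟨n, rfl⟩
    exact GenHom.basic n n (𝟙 _) (by simp)
  · rintro a ⟨n, rfl⟩
    exact hA n
  · intro x hx
    obtain ⟨fx⟩ := hx.2
    obtain ⟨n, t, -⟩ := Fact x hx.1 fx
    exact ⟨u.obj n, ⟨n, rfl⟩, ⟨t⟩⟩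
  · rintro y ⟨n, rfl⟩
    obtain ⟨b, hb, i, P⟩ := WI (u.obj n) (hA n) (cc.ι.app n)
    obtain ⟨s, hs⟩ := P b hb (𝟙 b)
    rw [Category.id_comp] at hs
    obtain ⟨m, t, ht⟩ := Fact b hb.1 s
    refine ⟨u.obj m, i ≫ t, GenHom.basic n m _ (by rw [Category.assoc, ht]; exact hs), ?_⟩
    intro z hz fz
    obtain ⟨g, hg⟩ := P z hz (t ≫ fz)
    obtain ⟨k, g', hg'⟩ := Fact z hz.1 g
    refine ⟨u.obj k, hA k, g', GenHom.basic n k _ ?_⟩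
    simp only [Category.assoc] at hg ⊢
    rw [hg']
    exact hg

/-- (b) implies (a): the back-and-forth construction of an automorphism. -/
lemma wi_imp_homog (K : Set L) (h0 : CondL0 L) (h1 : CondL1 K) (h2 : CondL2 K) (V : L)
    (WI : WeaklyInjective (age K V) V) : WeaklyHomogeneous K V := by
  intro a haK f
  obtain ⟨b, hbA, e, P⟩ := WI a ⟨haK, ⟨f⟩⟩ f
  obtain ⟨i0, hi0⟩ := P b hbA (𝟙 b)
  refine ⟨b, hbA.1, e, i0, by simpa using hi0, ?_⟩
  intro j
  obtain ⟨u, hu, cc, hpt, ⟨hc⟩⟩ := h1.2 V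
  subst hpt
  -- absorbers for each stage of the sequence
  have Q : ∀ n : ℕ, ∃ bb, bb ∈ age K cc.pt ∧ ∃ ee : u.obj n ⟶ bb,
      ∀ y ∈ age K cc.pt, ∀ s : bb ⟶ y, ∃ g : y ⟶ cc.pt, ee ≫ s ≫ g = cc.ι.app n := by
    intro n
    obtain ⟨bb, hbb, ee, Pn⟩ := WI (u.obj n) ⟨hu n, ⟨cc.ι.app n⟩⟩ (cc.ι.app n)
    exact ⟨bb, hbb, ee, Pn⟩
  choose B hB E PE using Q
  have Fact : ∀ x ∈ K, ∀ g : x ⟶ cc.pt, ∀ lo : ℕ, ∃ m, lo ≤ m ∧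
      ∃ t : x ⟶ u.obj m, t ≫ cc.ι.app m = g := by
    intro x hx g lo
    obtain ⟨m, t, ht⟩ := h2 x hx u hu cc hc g
    exact ⟨max m lo, le_max_right _ _, t ≫ u.map (homOfLE (le_max_left m lo)),
      by rw [Category.assoc, Cocone.w]; exact ht⟩
  have Step : ∀ p : Σ n : ℕ, B n ⟶ cc.pt, ∃ q : Σ n : ℕ, B n ⟶ cc.pt,
      p.1 < q.1 ∧ ∃ t : B p.1 ⟶ u.obj q.1, t ≫ cc.ι.app q.1 = p.2 ∧
        E p.1 ≫ t ≫ E q.1 ≫ q.2 = cc.ι.app p.1 := by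
    rintro ⟨n, s⟩
    obtain ⟨m, hm, t, ht⟩ := Fact (B n) (hB n).1 s (n + 1)
    obtain ⟨g, hg⟩ := PE n (B m) (hB m) (t ≫ E m)
    exact ⟨⟨m, g⟩, hm, t, ht, by simpa using hg⟩
  -- start of the recursion
  obtain ⟨n0, -, j0, hj0⟩ := Fact b hbA.1 j 0
  obtain ⟨s0, hs0⟩ := P (B n0) (hB n0) (j0 ≫ E n0)
  -- the interleaved sequence
  have main : ∃ (N : ℕ → ℕ) (S : ∀ k, B (N k) ⟶ cc.pt),
      (∃ t0 : b ⟶ u.obj (N 0), t0 ≫ cc.ι.app (N 0) = j ∧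
        e ≫ (t0 ≫ E (N 0)) ≫ S 0 = f) ∧
      ∀ k, N k < N (k + 1) ∧ ∃ t : B (N k) ⟶ u.obj (N (k + 1)),
        t ≫ cc.ι.app (N (k + 1)) = S k ∧
        E (N k) ≫ t ≫ E (N (k + 1)) ≫ S (k + 1) = cc.ι.app (N k) := by
    refine ⟨fun k => (Nat.rec (motive := fun _ => Σ n : ℕ, B n ⟶ cc.pt) ⟨n0, s0⟩
        (fun _ p => Classical.choose (Step p)) k).1,
      fun k => (Nat.rec (motive := fun _ => Σ n : ℕ, B n ⟶ cc.pt) ⟨n0, s0⟩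
        (fun _ p => Classical.choose (Step p)) k).2, ⟨j0, hj0, hs0⟩, fun k => ?_⟩
    exact Classical.choose_spec (Step _)
  obtain ⟨N, S, ⟨t0, ht0, hanchor⟩, hF⟩ := main
  have hlt : ∀ k, N k < N (k + 1) := fun k => (hF k).1
  choose t ht1 ht2 using fun k => (hF k).2
  have hNmono : Monotone N := monotone_nat_of_le_succ fun k => (hlt k).le
  have hNk : ∀ k, k ≤ N k := by
    intro k
    induction k with
    | zero => exact Nat.zero_le _
    | succ k ih => exact Nat.lt_of_le_of_lt ih (hlt k)
  -- the two-step relation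
  have R5 : ∀ (k : ℕ) (h : N k ≤ N (k + 1 + 1)),
      u.map (homOfLE h) ≫ (E (N (k + 1 + 1)) ≫ S (k + 1 + 1)) = E (N k) ≫ S k := by
    intro k h
    have htt : (E (N k) ≫ t k) ≫ (E (N (k + 1)) ≫ t (k + 1)) = u.map (homOfLE h) := by
      refine (h0 (cc.ι.app (N (k + 1 + 1)))).right_cancellation _ _ ?_
      simp only [Category.assoc]
      rw [ht1 (k + 1), ht2 k, Cocone.w]
    rw [← htt]
    simp only [Category.assoc]
    rw [ht2 (k + 1), ht1 k]
  have R4 : ∀ (q k l : ℕ) (h : N k ≤ N l), l = k + 2 * q →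
      u.map (homOfLE h) ≫ (E (N l) ≫ S l) = E (N k) ≫ S k := by
    intro q
    induction q with
    | zero =>
      intro k l h hl
      obtain rfl : l = k := by omega
      rw [show (homOfLE h : (N l : ℕ) ⟶ N l) = 𝟙 (N l) from rfl]
      simp
    | succ q ih =>
      intro k l h hl
      have hk1 : N k ≤ N (k + 1 + 1) := hNmono (by omega)
      have hk2 : N (k + 1 + 1) ≤ N l := hNmono (by omega)
      rw [show (homOfLE h : (N k : ℕ) ⟶ N l) = homOfLE hk1 ≫ homOfLE hk2 from rfl,
        Functor.map_comp, Category.assoc, ih (k + 1 + 1) l hk2 (by omega)]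
      exact R5 k hk1
  have hle1 : ∀ m : ℕ, m ≤ N (2 * m) := fun m => le_trans (by omega) (hNk (2 * m))
  have hle2 : ∀ m : ℕ, m ≤ N (2 * m + 1) := fun m => le_trans (by omega) (hNk (2 * m + 1))
  -- the two cocones and induced endomorphisms
  let d : Cocone u :=
    { pt := cc.pt
      ι :=
        { app := fun m => u.map (homOfLE (hle1 m)) ≫ (E (N (2 * m)) ≫ S (2 * m))
          naturality := by
            intro m m' g
            have hm : m ≤ m' := leOfHom g
            have key := R4 (m' - m) (2 * m) (2 * m') (hNmono (by omega)) (by omega)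
            simp only [Functor.const_obj_obj, Functor.const_obj_map, Category.comp_id]
            rw [← key]
            simp only [← Category.assoc]
            rw [← Functor.map_comp, ← Functor.map_comp]
            rfl } }
  let d' : Cocone u :=
    { pt := cc.pt
      ι :=
        { app := fun m => u.map (homOfLE (hle2 m)) ≫ (E (N (2 * m + 1)) ≫ S (2 * m + 1))
          naturality := by
            intro m m' g
            have hm : m ≤ m' := leOfHom g
            have key := R4 (m' - m) (2 * m + 1) (2 * m' + 1) (hNmono (by omega)) (by omega)
            simp only [Functor.const_obj_obj, Functor.const_obj_map, Category.comp_id]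
            rw [← key]
            simp only [← Category.assoc]
            rw [← Functor.map_comp, ← Functor.map_comp]
            rfl } }
  let h : cc.pt ⟶ cc.pt := hc.desc d
  let h' : cc.pt ⟶ cc.pt := hc.desc d'
  have fac : ∀ m, cc.ι.app m ≫ h =
      u.map (homOfLE (hle1 m)) ≫ (E (N (2 * m)) ≫ S (2 * m)) := fun m => hc.fac d m
  have fac' : ∀ m, cc.ι.app m ≫ h' =
      u.map (homOfLE (hle2 m)) ≫ (E (N (2 * m + 1)) ≫ S (2 * m + 1)) := fun m => hc.fac d' m
  have key1 : ∀ l, l % 2 = 0 → cc.ι.app (N l) ≫ h = E (N l) ≫ S l := by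
    intro l hl
    rw [fac (N l)]
    exact R4 ((2 * N l - l) / 2) l (2 * N l)
      (hNmono (by have := hNk l; omega)) (by have := hNk l; omega)
  have key2 : ∀ l, l % 2 = 1 → cc.ι.app (N l) ≫ h' = E (N l) ≫ S l := by
    intro l hl
    rw [fac' (N l)]
    exact R4 ((2 * N l + 1 - l) / 2) l (2 * N l + 1)
      (hNmono (by have := hNk l; omega)) (by have := hNk l; omega)
  have hinv1 : h ≫ h' = 𝟙 cc.pt := by
    refine hc.hom_ext fun m => ?_
    have e0 : cc.ι.app m ≫ 𝟙 cc.pt = cc.ι.app m := by simp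
    rw [e0]
    have e1 : cc.ι.app m = u.map (homOfLE (hle1 m)) ≫ cc.ι.app (N (2 * m)) :=
      (cc.w (homOfLE (hle1 m))).symm
    have inner : cc.ι.app (N (2 * m)) ≫ h ≫ h' = cc.ι.app (N (2 * m)) := by
      rw [← Category.assoc, key1 (2 * m) (by omega), ← ht1 (2 * m)]
      simp only [Category.assoc]
      rw [key2 (2 * m + 1) (by omega)]
      exact ht2 (2 * m)
    rw [e1, Category.assoc, inner]
  have hinv2 : h' ≫ h = 𝟙 cc.pt := by
    refine hc.hom_ext fun m => ?_
    have e0 : cc.ι.app m ≫ 𝟙 cc.pt = cc.ι.app m := by simp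
    rw [e0]
    have e1 : cc.ι.app m = u.map (homOfLE (hle2 m)) ≫ cc.ι.app (N (2 * m + 1)) :=
      (cc.w (homOfLE (hle2 m))).symm
    have inner : cc.ι.app (N (2 * m + 1)) ≫ h' ≫ h = cc.ι.app (N (2 * m + 1)) := by
      rw [← Category.assoc, key2 (2 * m + 1) (by omega), ← ht1 (2 * m + 1)]
      simp only [Category.assoc]
      rw [key1 (2 * m + 1 + 1) (by omega)]
      exact ht2 (2 * m + 1)
    rw [e1, Category.assoc, inner]
  refine ⟨⟨h, h', hinv1, hinv2⟩, ?_⟩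
  show e ≫ j ≫ h = f
  rw [← ht0]
  simp only [Category.assoc]
  rw [key1 0 rfl]
  simp only [Category.assoc] at hanchor
  exact hanchor


/-- for an `L`-object `V` with age `K_V` relative to `K`, the following
are equivalent: (a) `V` is weakly homogeneous; (b) `V` is weakly `K_V`-injective;
(c) `K_V` is a weak Fraïssé category and `V` is `K_V`-generic. -/
theorem weaklyHomogeneous_tfae (K : Set L)
    (h0 : CondL0 L) (h1 : CondL1 K) (h2 : CondL2 K) (V : L) :
    List.TFAE
      [WeaklyHomogeneous K V,
       WeaklyInjective (age K V) V,
       IsWeakFraisseCatIn (age K V) ∧ IsGeneric (age K V) V] := by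
  tfae_have 1 → 2 := homog_imp_wi K V
  tfae_have 2 → 3 := wi_imp_fraisse K h0 h1 h2 V
  tfae_have 3 → 2 := fun hx => hx.2.2
  tfae_have 2 → 1 := wi_imp_homog K h0 h1 h2 V
  tfae_finish
end
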